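/- Let g be an M♮-convex function with finite nonempty effective domain and let b : E → {0,1}. Let k be an integer with k̲ + 1 ≤ k ≤ k̄ and let x_k ∈ 𝒯_k. Then there exists a transition (u,v) with respect to x_k, with u ∈ E_1 and v ∈ E_0 ∪ {z}, such that x_k − χ_u + χ_v ∈ 𝒯_{k−1}. -/

import Mathlib

/-!
Take `y ∈ 𝒯_{k-1}` as close as possible to `x_k` in ℓ¹. Since `⟨b,y⟩ < ⟨b,x_k⟩` there is
`u ∈ E₁` with `y(u) < x_k(u)`, and the M♮-exchange at `u` produces `x' = x_k - χ_u + χ_v` and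
`y' = y + χ_u - χ_v` with `g(x') + g(y') ≤ g(x_k) + g(y)`. If `v ∈ E₀ ∪ {z}`, then `x'` and `y'`
lie on the levels `k - 1` and `k`, and optimality of `x_k` on level `k` forces `x' ∈ 𝒯_{k-1}`.
If `v ∈ E₁`, the levels are swapped, so `y' ∈ 𝒯_{k-1}` and `y'` is strictly closer to `x_k`,
contradicting the choice of `y`. The same exchange, iterated, shows that level `k - 1` of
`dom g` is nonempty, so that `𝒯_{k-1}` is nonempty by finiteness of `dom g`.
-/

open scoped BigOperators

/-- Characteristic vector of a singleton `{u}`. -/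
def chiv {E : Type*} [DecidableEq E] (u : E) : E → ℤ := fun e => if e = u then 1 else 0

/-- Characteristic vector allowing the dummy symbol `z` (modelled as `none`), with `χ_z = 0`. -/
def chiOpt {E : Type*} [DecidableEq E] (v : Option E) : E → ℤ :=
  fun e => match v with
  | none => 0
  | some w => chiv w e

/-- M♮-convexity (with nonempty effective domain) for `g : (E → ℤ) → ℝ ∪ {+∞}`. -/
def MnatConvex {E : Type*} [DecidableEq E] (g : (E → ℤ) → WithTop ℝ) : Prop :=
  (∃ x, g x < ⊤) ∧
  ∀ x y : E → ℤ, g x < ⊤ → g y < ⊤ → ∀ u : E, y u < x u →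
    (g (x - chiv u) + g (y + chiv u) ≤ g x + g y) ∨
    (∃ v : E, x v < y v ∧
      g (x - chiv u + chiv v) + g (y + chiv u - chiv v) ≤ g x + g y)

/-- `⟨b,x⟩ = ∑ e, b e * x e`. -/
def innerb {E : Type*} [Fintype E] (b : E → ℤ) (x : E → ℤ) : ℤ := ∑ e, b e * x e

/-- `𝒯_i`: the minimizers of `g` on `𝒫_i = {x ∈ dom g : ⟨b,x⟩ = i}`. -/
def Tset {E : Type*} [Fintype E] (g : (E → ℤ) → WithTop ℝ) (b : E → ℤ) (i : ℤ) :
    Set (E → ℤ) :=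
  {x | g x < ⊤ ∧ innerb b x = i ∧ ∀ y : E → ℤ, g y < ⊤ → innerb b y = i → g x ≤ g y}

/-- A transition `(u,v)` with respect to `x`: `u ∈ E₁`, `v ∈ E₀ ∪ {z}`, and
`x - χ_u + χ_v ∈ dom g`. -/
def IsTransition {E : Type*} [DecidableEq E] (g : (E → ℤ) → WithTop ℝ) (b : E → ℤ)
    (x : E → ℤ) (u : E) (v : Option E) : Prop :=
  b u = 1 ∧ (∀ w : E, v = some w → b w = 0) ∧ g (x - chiv u + chiOpt v) < ⊤

/-- The cost `g(x;u,v) = g(x - χ_u + χ_v) - g(x)` of a transition (as a real number;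
both values are finite for transitions with respect to `x ∈ dom g`). -/
noncomputable def transCost {E : Type*} [DecidableEq E] (g : (E → ℤ) → WithTop ℝ)
    (x : E → ℤ) (u : E) (v : Option E) : ℝ :=
  (g (x - chiv u + chiOpt v)).untopD 0 - (g x).untopD 0

/-- A minimum transition with respect to `x`. -/
def IsMinTransition {E : Type*} [Fintype E] [DecidableEq E] (g : (E → ℤ) → WithTop ℝ)
    (b : E → ℤ) (x : E → ℤ) (u : E) (v : Option E) : Prop :=
  IsTransition g b x u v ∧
    ∀ (u' : E) (v' : Option E), IsTransition g b x u' v' →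
      transCost g x u v ≤ transCost g x u' v'

lemma WithTop.le_of_add_le_add_of_le {a b c d : WithTop ℝ} (hb : b ≠ ⊤) (h : a + c ≤ b + d)
    (hba : b ≤ a) : c ≤ d :=
  (WithTop.add_le_add_iff_left hb).1 ((add_le_add_left hba c).trans h)

section

variable {E : Type*} [Fintype E]

@[simp]
lemma innerb_add (b x y : E → ℤ) : innerb b (x + y) = innerb b x + innerb b y := by
  simp [innerb, mul_add, Finset.sum_add_distrib]

@[simp]
lemma innerb_sub (b x y : E → ℤ) : innerb b (x - y) = innerb b x - innerb b y := by
  simp [innerb, mul_sub, Finset.sum_sub_distrib]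

lemma exists_lt_of_innerb_lt {b x y : E → ℤ} (hb : ∀ e, b e = 0 ∨ b e = 1)
    (h : innerb b y < innerb b x) : ∃ u, b u = 1 ∧ y u < x u := by
  by_contra! hc
  have : innerb b x ≤ innerb b y := Finset.sum_le_sum fun e _ => by
    rcases hb e with he | he
    · simp [he]
    · simpa [he] using hc e he
  omega

def l1norm (d : E → ℤ) : ℕ := ∑ e, (d e).natAbs

variable {g : (E → ℤ) → WithTop ℝ} {b : E → ℤ}

lemma Tset_nonempty_of_finite (hfin : {x : E → ℤ | g x < ⊤}.Finite) {x : E → ℤ} {i : ℤ}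
    (hx : g x < ⊤) (hxi : innerb b x = i) : (Tset g b i).Nonempty := by
  obtain ⟨y, hy, hymin⟩ := Set.exists_min_image {x | g x < ⊤ ∧ innerb b x = i} g
    (hfin.subset fun _ h => h.1) ⟨x, hx, hxi⟩
  exact ⟨y, hy.1, hy.2, fun z hz hzi => hymin z ⟨hz, hzi⟩⟩

lemma mem_Tset_of_add_le_add {i j : ℤ} {x y x' y' : E → ℤ} (hx : x ∈ Tset g b i)
    (hy : y ∈ Tset g b j) (hx' : g x' < ⊤) (hx'j : innerb b x' = j) (hy' : g y' < ⊤)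
    (hy'i : innerb b y' = i) (h : g x' + g y' ≤ g x + g y) : x' ∈ Tset g b j := by
  have hle : g x' ≤ g y :=
    WithTop.le_of_add_le_add_of_le hx.1.ne (by rwa [add_comm (g x')] at h) (hx.2.2 y' hy' hy'i)
  exact ⟨hx', hx'j, fun z hz hzj => hle.trans (hy.2.2 z hz hzj)⟩

end

section

variable {E : Type*} [DecidableEq E] {g : (E → ℤ) → WithTop ℝ}

@[simp]
lemma chiOpt_none : chiOpt (none : Option E) = 0 := rfl

@[simp]
lemma chiOpt_some (w : E) : chiOpt (some w) = chiv w := rfl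

lemma MnatConvex.exists_exchange (hg : MnatConvex g) {x y : E → ℤ} (hx : g x < ⊤)
    (hy : g y < ⊤) {u : E} (hu : y u < x u) :
    ∃ v : Option E, (∀ w, v = some w → x w < y w) ∧
      g (x - chiv u + chiOpt v) < ⊤ ∧ g (y + chiv u - chiOpt v) < ⊤ ∧
      g (x - chiv u + chiOpt v) + g (y + chiv u - chiOpt v) ≤ g x + g y := by
  have hsum : g x + g y < ⊤ := WithTop.add_lt_top.2 ⟨hx, hy⟩
  obtain ⟨v, hv, h⟩ : ∃ v : Option E, (∀ w, v = some w → x w < y w) ∧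
      g (x - chiv u + chiOpt v) + g (y + chiv u - chiOpt v) ≤ g x + g y := by
    rcases hg.2 x y hx hy u hu with h | ⟨w, hw, h⟩
    · exact ⟨none, by simp, by simpa using h⟩
    · exact ⟨some w, by simpa using hw, h⟩
  exact ⟨v, hv, WithTop.add_lt_top.1 (h.trans_lt hsum) |>.1,
    WithTop.add_lt_top.1 (h.trans_lt hsum) |>.2, h⟩

variable [Fintype E] {b : E → ℤ}

@[simp]
lemma innerb_chiv (b : E → ℤ) (u : E) : innerb b (chiv u) = b u := by
  simp [innerb, chiv, mul_ite, Finset.sum_ite_eq']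

lemma innerb_chiOpt (b : E → ℤ) (v : Option E) : innerb b (chiOpt v) = v.elim 0 b := by
  cases v with
  | none => simp [innerb, chiOpt]
  | some w => exact innerb_chiv b w

lemma l1norm_sub_chiv_add_chiv_lt {d : E → ℤ} {u w : E} (hu : 0 < d u) (hw : d w < 0) :
    l1norm (d - chiv u + chiv w) < l1norm d := by
  have huw : u ≠ w := by rintro rfl; omega
  refine Finset.sum_lt_sum (fun e _ => ?_) ⟨u, Finset.mem_univ u, ?_⟩
  · by_cases heu : e = u
    · subst heu; simp [chiv, huw]; omega
    by_cases hew : e = w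
    · subst hew; simp [chiv, heu]; omega
    simp [chiv, heu, hew]
  · simp [chiv, huw]; omega

lemma MnatConvex.exists_innerb_eq_pred (hg : MnatConvex g) (hb : ∀ e, b e = 0 ∨ b e = 1)
    {x y : E → ℤ} (hx : g x < ⊤) (hy : g y < ⊤) (hlt : innerb b y < innerb b x) :
    ∃ x', g x' < ⊤ ∧ innerb b x' = innerb b x - 1 := by
  induction hn : l1norm (x - y) using Nat.strong_induction_on generalizing x with
  | _ n ih =>
  obtain ⟨u, hbu, hu⟩ := exists_lt_of_innerb_lt hb hlt
  obtain ⟨v, hv, hx', -, -⟩ := hg.exists_exchange hx hy hu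
  rcases v with _ | w
  · exact ⟨_, hx', by simp [hbu]⟩
  rcases hb w with hw | hw
  · exact ⟨_, hx', by simp [hbu, hw]⟩
  have hcloser : l1norm (x - chiv u + chiOpt (some w) - y) < n := by
    rw [← hn, chiOpt_some, show x - chiv u + chiv w - y = x - y - chiv u + chiv w by abel]
    exact l1norm_sub_chiv_add_chiv_lt (by simp; omega) (by simpa using hv w rfl)
  obtain ⟨x'', hx'', hlevel⟩ := ih _ hcloser hx' (by simp [hbu, hw]; omega) rfl
  exact ⟨x'', hx'', by simp [hlevel, hbu, hw]⟩

lemma MnatConvex.exists_transition_or_closer (hg : MnatConvex g)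
    (hb : ∀ e, b e = 0 ∨ b e = 1) {k : ℤ} {x y : E → ℤ} (hx : x ∈ Tset g b k)
    (hy : y ∈ Tset g b (k - 1)) :
    (∃ (u : E) (v : Option E),
        IsTransition g b x u v ∧ x - chiv u + chiOpt v ∈ Tset g b (k - 1)) ∨
      ∃ y' ∈ Tset g b (k - 1), l1norm (x - y') < l1norm (x - y) := by
  obtain ⟨u, hbu, hu⟩ := exists_lt_of_innerb_lt hb (show innerb b y < innerb b x by
    rw [hx.2.1, hy.2.1]; omega)
  obtain ⟨v, hv, hx', hy', h⟩ := hg.exists_exchange hx.1 hy.1 hu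
  have hxlevel : innerb b (x - chiv u + chiOpt v) = k - 1 + v.elim 0 b := by
    simp [innerb_chiOpt, hbu, hx.2.1]
  have hylevel : innerb b (y + chiv u - chiOpt v) = k - v.elim 0 b := by
    simp [innerb_chiOpt, hbu, hy.2.1]
  by_cases hv0 : v.elim 0 b = 0
  · refine .inl ⟨u, v, ⟨hbu, fun w hw => by simpa [hw] using hv0, hx'⟩, ?_⟩
    exact mem_Tset_of_add_le_add hx hy hx' (by rw [hxlevel, hv0, add_zero])
      hy' (by rw [hylevel, hv0, sub_zero]) h
  · obtain ⟨w, rfl, hw⟩ : ∃ w, v = some w ∧ b w = 1 := by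
      rcases v with _ | w
      · exact absurd rfl hv0
      · exact ⟨w, rfl, (hb w).resolve_left hv0⟩
    refine .inr ⟨_, mem_Tset_of_add_le_add hx hy hy' (by rw [hylevel]; simp [hw]) hx'
      (by rw [hxlevel]; simp [hw]) (by rwa [add_comm]), ?_⟩
    rw [chiOpt_some, show x - (y + chiv u - chiv w) = x - y - chiv u + chiv w by abel]
    exact l1norm_sub_chiv_add_chiv_lt (by simp; omega) (by simpa using hv w rfl)

end

theorem stmt_4_general {E : Type*} [Fintype E] [DecidableEq E]
    (g : (E → ℤ) → WithTop ℝ) (b : E → ℤ)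
    (hg : MnatConvex g)
    (hfin : {x : E → ℤ | g x < ⊤}.Finite)
    (hb : ∀ e : E, b e = 0 ∨ b e = 1)
    (kmin : ℤ)
    (hkmin : (Tset g b kmin).Nonempty ∧ ∀ k : ℤ, (Tset g b k).Nonempty → kmin ≤ k)
    (k : ℤ) (hk1 : kmin + 1 ≤ k)
    (xk : E → ℤ) (hxk : xk ∈ Tset g b k) :
    ∃ (u : E) (v : Option E), IsTransition g b xk u v ∧
      xk - chiv u + chiOpt v ∈ Tset g b (k - 1) := by
  obtain ⟨y₀, hy₀⟩ := hkmin.1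
  obtain ⟨x', hx', hx'level⟩ := hg.exists_innerb_eq_pred hb hxk.1 hy₀.1
    (by rw [hxk.2.1, hy₀.2.1]; omega)
  have hT : (Tset g b (k - 1)).Nonempty :=
    Tset_nonempty_of_finite hfin hx' (hx'level.trans (by rw [hxk.2.1]))
  obtain ⟨y, hy, hclosest⟩ := Set.exists_min_image _ (fun y => l1norm (xk - y))
    (hfin.subset fun _ h => h.1) hT
  rcases hg.exists_transition_or_closer hb hxk hy with h | ⟨y', hy', hcloser⟩
  · exact h
  · exact absurd hcloser (hclosest y' hy').not_gt

/-- for `x_k ∈ 𝒯_k` with `k̲+1 ≤ k ≤ k̄`, there exists a transition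
`(u,v)` with respect to `x_k` such that `x_k - χ_u + χ_v ∈ 𝒯_{k-1}`. -/
theorem stmt_4 {E : Type*} [Fintype E] [DecidableEq E] [Nonempty E]
    (g : (E → ℤ) → WithTop ℝ) (b : E → ℤ)
    (hg : MnatConvex g)
    (hfin : {x : E → ℤ | g x < ⊤}.Finite)
    (hb : ∀ e : E, b e = 0 ∨ b e = 1)
    (kmin kmax : ℤ)
    (hkmin : (Tset g b kmin).Nonempty ∧ ∀ k : ℤ, (Tset g b k).Nonempty → kmin ≤ k)
    (hkmax : (Tset g b kmax).Nonempty ∧ ∀ k : ℤ, (Tset g b k).Nonempty → k ≤ kmax)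
    (k : ℤ) (hk1 : kmin + 1 ≤ k) (hk2 : k ≤ kmax)
    (xk : E → ℤ) (hxk : xk ∈ Tset g b k) :
    ∃ (u : E) (v : Option E), IsTransition g b xk u v ∧
      xk - chiv u + chiOpt v ∈ Tset g b (k - 1) :=
  stmt_4_general g b hg hfin hb kmin hkmin k hk1 xk hxk
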